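/- Let ϑ be a primitive, compatible random substitution of constant length ℓ with disjoint images. If there exists a legal word v of length ℓ with v ∉ ϑ(𝒜) such that v appears as a subword of every element of X_ϑ, then X_ϑ contains no periodic points. -/

import Mathlib

open List

variable {A : Type*}

/-- Extension of a random substitution to words, by concatenation. -/
def substWord (θ : A → Set (List A)) : List A → Set (List A)
  | [] => {[]}
  | a :: u => {w | ∃ x ∈ θ a, ∃ y ∈ substWord θ u, w = x ++ y}

/-- The set of realisations of `θ^k` on a word. -/
def substPowWord (θ : A → Set (List A)) : ℕ → List A → Set (List A)
  | 0, u => {u}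
  | (k+1), u => ⋃ v ∈ substPowWord θ k u, substWord θ v

/-- The power `θ^k` as a random substitution. -/
def powSub (θ : A → Set (List A)) (k : ℕ) : A → Set (List A) :=
  fun a => substPowWord θ k [a]

/-- `θ` is a (finite range) random substitution: every letter has a nonempty
finite set of realisations, all of which are nonempty words. -/
def RandomSubstitution (θ : A → Set (List A)) : Prop :=
  ∀ a : A, (θ a).Nonempty ∧ (θ a).Finite ∧ ∀ w ∈ θ a, w ≠ []

/-- A word is `θ`-legal if it is a subword of a realisation of some power of
`θ` on some letter. -/
def IsLegal (θ : A → Set (List A)) (u : List A) : Prop :=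
  ∃ k : ℕ, ∃ a : A, ∃ w ∈ substPowWord θ k [a], u <:+: w

/-- `θ` has disjoint images. -/
def HasDisjointImages (θ : A → Set (List A)) : Prop :=
  ∀ u v : List A, IsLegal θ u → IsLegal θ v →
    (substWord θ u ∩ substWord θ v).Nonempty → u = v

/-- `θ` has constant length `ℓ`. -/
def ConstantLength (θ : A → Set (List A)) (ℓ : ℕ) : Prop :=
  ∀ a : A, ∀ w ∈ θ a, w.length = ℓ

/-- `θ` is compatible: abelianisations of realisations are well defined. -/
def Compatible [DecidableEq A] (θ : A → Set (List A)) : Prop :=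
  ∀ a : A, ∀ u ∈ θ a, ∀ v ∈ θ a, ∀ b : A, u.count b = v.count b

/-- `θ` is primitive. -/
def Primitive (θ : A → Set (List A)) : Prop :=
  ∃ k : ℕ, ∀ a b : A, ∃ w ∈ substPowWord θ k [a], b ∈ w

/-- The finite subword of a bi-infinite sequence starting at `i`, of length `n`. -/
def extract (x : ℤ → A) (i : ℤ) (n : ℕ) : List A :=
  (List.range n).map fun j => x (i + j)

/-- The RS-subshift of `θ`: bi-infinite sequences all of whose subwords are legal. -/
def Subshift (θ : A → Set (List A)) : Set (ℤ → A) :=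
  {x | ∀ i : ℤ, ∀ n : ℕ, IsLegal θ (extract x i n)}

/-- `x` is a realisation-wise image of `y` under `θ`: there is a decomposition
of `x` into consecutive inflation words, with a cut at the origin, the `n`-th
of which is a realisation of `θ` on `y n`. -/
def SeqImage (θ : A → Set (List A)) (y x : ℤ → A) : Prop :=
  ∃ c : ℤ → ℤ, c 0 = 0 ∧ (∀ n : ℤ, c n < c (n + 1)) ∧
    ∀ n : ℤ, extract x (c n) (c (n + 1) - c n).toNat ∈ θ (y n)

/-- `θ` is globally uniquely recognisable. -/
def GloballyUniquelyRecognisable (θ : A → Set (List A)) : Prop :=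
  ∀ x ∈ Subshift θ, ∃! y : ℤ → A, y ∈ Subshift θ ∧
    ∃ k : ℕ, (∃ w ∈ θ (y 0), k < w.length) ∧ SeqImage θ y (fun n => x (n - k))

/-- `x` has period `p` (as a natural number, acting on indices in `ℤ`). -/
def HasPeriod (x : ℤ → A) (p : ℕ) : Prop :=
  ∀ n : ℤ, x (n + p) = x n

/-- `x` is shift-periodic. -/
def IsPeriodic (x : ℤ → A) : Prop :=
  ∃ p : ℕ, 0 < p ∧ HasPeriod x p

/-- `p` is the prime (least) period of `x`. -/
def PrimePeriod (x : ℤ → A) (p : ℕ) : Prop :=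
  0 < p ∧ HasPeriod x p ∧ ∀ q : ℕ, 0 < q → HasPeriod x q → p ≤ q

/-- `u` is a periodic block for `x`: up to shift, `x` is the bi-infinite
repetition of `u`. -/
def PeriodicBlock (u : List A) (x : ℤ → A) : Prop :=
  u ≠ [] ∧ ∃ i : ℤ, ∀ n : ℤ, extract x (i + n * u.length) u.length = u

/-!
A point of period `p` gives `p`-periodic legal words of every length. Cutting a long
`p`-periodic legal word into the inflation words of a legal preimage `w`, blocks
`p / gcd(p, ℓ)` apart lie a multiple of `p` apart, hence are equal, and disjoint images force
the corresponding letters of `w` to agree; so there are legal words of every length with the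
smaller period `p / gcd(p, ℓ)`. Iterating reaches a period `q` coprime to `ℓ`, and a pigeonhole
argument on the first `q` letters produces a `q`-periodic point `y` of the subshift. The
unavoidable word `v` occurs in `y` at positions `i + kq`, and as `q` is coprime to `ℓ` one of
these occurrences is aligned with the inflation-word decomposition of a long window of `y`, so
`v` would be an inflation word.
-/

theorem extract_eq_map (x : ℤ → A) (i : ℤ) (n : ℕ) :
    extract x i n = (List.range n).map fun j : ℕ => x (i + j) := by
  simp [_root_.extract, ← List.map_eq_flatMap]

theorem length_extract (x : ℤ → A) (i : ℤ) (n : ℕ) : (extract x i n).length = n := by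
  simp [extract_eq_map]

theorem getElem?_extract (x : ℤ → A) (i : ℤ) (n t : ℕ) :
    (extract x i n)[t]? = if t < n then some (x (i + t)) else none := by
  split_ifs with h <;> simp [extract_eq_map, h]

theorem take_extract (x : ℤ → A) (i : ℤ) (n m : ℕ) :
    (extract x i n).take m = extract x i (min m n) := by
  simp [extract_eq_map, ← List.map_take, List.take_range]

theorem drop_extract (x : ℤ → A) (i : ℤ) (n k : ℕ) :
    (extract x i n).drop k = extract x (i + k) (n - k) := by
  refine List.ext_getElem? fun t => ?_
  rw [List.getElem?_drop, getElem?_extract, getElem?_extract]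
  split_ifs with h₁ h₂ h₂
  · push_cast; ring_nf
  · omega
  · omega
  · rfl

def WordHasPeriod (u : List A) (q : ℕ) : Prop :=
  ∀ t : ℕ, t + q < u.length → u[t + q]? = u[t]?

namespace WordHasPeriod

variable {u : List A} {q : ℕ}

theorem getElem?_add_mul (hu : WordHasPeriod u q) (c : ℕ) {t : ℕ} (ht : t + c * q < u.length) :
    u[t + c * q]? = u[t]? := by
  induction c with
  | zero => simp
  | succ c ih =>
    rw [show t + (c + 1) * q = t + c * q + q by ring, hu _ (by nlinarith), ih (by nlinarith)]

theorem getElem?_mod (hu : WordHasPeriod u q) {t : ℕ} (ht : t < u.length) :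
    u[t]? = u[t % q]? := by
  conv_lhs => rw [← Nat.mod_add_div' t q]
  exact hu.getElem?_add_mul _ (by rwa [Nat.mod_add_div'])

theorem take_drop_add_mul (hu : WordHasPeriod u q) {k c m : ℕ}
    (h : k + c * q + m ≤ u.length) :
    (u.drop (k + c * q)).take m = (u.drop k).take m := by
  refine List.ext_getElem? fun t => ?_
  simp only [List.getElem?_take, List.getElem?_drop]
  split_ifs with ht
  · rw [show k + c * q + t = k + t + c * q by ring, hu.getElem?_add_mul c (by omega)]
  · rfl

end WordHasPeriod

theorem HasPeriod.wordHasPeriod_extract {x : ℤ → A} {q : ℕ} (hx : HasPeriod x q) (i : ℤ)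
    (n : ℕ) : WordHasPeriod (extract x i n) q := by
  intro t ht
  rw [length_extract] at ht
  rw [getElem?_extract, getElem?_extract, if_pos ht, if_pos (by omega), Nat.cast_add,
    ← add_assoc, hx]

section Substitution

variable {θ : A → Set (List A)} {ℓ : ℕ}

theorem mem_substWord_singleton {a : A} {z : List A} : z ∈ substWord θ [a] ↔ z ∈ θ a := by
  simp [substWord]

theorem length_of_mem_substWord (hℓ : ConstantLength θ ℓ) :
    ∀ {w z : List A}, z ∈ substWord θ w → z.length = w.length * ℓ
  | [], _, hz => by simp_all [substWord]
  | a :: w, _, ⟨x, hx, y, hy, hz⟩ => by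
    rw [hz, List.length_append, hℓ a x hx, length_of_mem_substWord hℓ hy, List.length_cons]
    ring

theorem take_drop_mem_of_mem_substWord (hℓ : ConstantLength θ ℓ) :
    ∀ {w z : List A}, z ∈ substWord θ w →
      ∀ {m : ℕ} {a : A}, w[m]? = some a → (z.drop (m * ℓ)).take ℓ ∈ θ a
  | [], _, _, _, _, hm => by simp at hm
  | b :: w, _, ⟨x, hx, y, hy, hz⟩, m, a, hm => by
    subst hz
    cases m with
    | zero =>
      simp only [List.getElem?_cons_zero, Option.some.injEq] at hm
      subst hm
      simpa [List.take_left' (hℓ _ x hx)] using hx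
    | succ m =>
      rw [show (m + 1) * ℓ = x.length + m * ℓ by rw [hℓ b x hx]; ring, List.drop_length_add_append]
      exact take_drop_mem_of_mem_substWord hℓ hy (by simpa using hm)

theorem substWord_finite (hθ : RandomSubstitution θ) : ∀ u : List A, (substWord θ u).Finite
  | [] => Set.finite_singleton _
  | a :: u => ((hθ a).2.1.image2 (· ++ ·) (substWord_finite hθ u)).subset <| by
    rintro _ ⟨x, hx, y, hy, rfl⟩
    exact ⟨x, hx, y, hy, rfl⟩

theorem substPowWord_finite (hθ : RandomSubstitution θ) (u : List A) :
    ∀ k, (substPowWord θ k u).Finite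
  | 0 => Set.finite_singleton _
  | k + 1 => (substPowWord_finite hθ u k).biUnion fun v _ => substWord_finite hθ v

theorem finite_of_primitive [Nonempty A] (hθ : RandomSubstitution θ) (hprim : Primitive θ) :
    Finite A := by
  obtain ⟨k, hk⟩ := hprim
  obtain ⟨a⟩ := ‹Nonempty A›
  refine Set.finite_univ_iff.mp <|
    ((substPowWord_finite hθ [a] k).biUnion fun w _ => w.finite_toSet).subset fun b _ => ?_
  obtain ⟨w, hw, hbw⟩ := hk a b
  exact Set.mem_biUnion hw hbw

theorem ConstantLength.pos [Nonempty A] (hθ : RandomSubstitution θ) (hℓ : ConstantLength θ ℓ) :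
    0 < ℓ := by
  obtain ⟨a⟩ := ‹Nonempty A›
  obtain ⟨w, hw⟩ := (hθ a).1
  rw [← hℓ a w hw, List.length_pos_iff]
  exact (hθ a).2.2 w hw

end Substitution

section Legal

variable {θ : A → Set (List A)} {ℓ : ℕ}

theorem IsLegal.of_infix {u w : List A} (hw : IsLegal θ w) (h : u <:+: w) : IsLegal θ u :=
  let ⟨k, a, z, hz, hwz⟩ := hw
  ⟨k, a, z, hz, h.trans hwz⟩

theorem IsLegal.singleton_of_mem {w : List A} (hw : IsLegal θ w) {b : A} (hb : b ∈ w) :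
    IsLegal θ [b] :=
  hw.of_infix ((List.singleton_infix_iff b w).mpr hb)

theorem isLegal_of_mem_substPowWord {k : ℕ} {a : A} {w : List A}
    (hw : w ∈ substPowWord θ k [a]) : IsLegal θ w :=
  ⟨k, a, w, hw, List.infix_rfl⟩

theorem HasDisjointImages.eq_of_mem (hd : HasDisjointImages θ) {b c : A} (hb : IsLegal θ [b])
    (hc : IsLegal θ [c]) {B : List A} (hBb : B ∈ θ b) (hBc : B ∈ θ c) : b = c := by
  simpa using hd [b] [c] hb hc
    ⟨B, mem_substWord_singleton.mpr hBb, mem_substWord_singleton.mpr hBc⟩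

theorem exists_mem_substWord (hθ : RandomSubstitution θ) (hprim : Primitive θ) (b : A) :
    ∃ w z, IsLegal θ w ∧ z ∈ substWord θ w ∧ b ∈ z := by
  obtain ⟨k, hk⟩ := hprim
  cases k with
  | zero =>
    -- primitivity in zero steps forces a one-letter alphabet
    obtain ⟨z, hz⟩ := (hθ b).1
    obtain ⟨e, he⟩ := List.exists_mem_of_ne_nil z ((hθ b).2.2 z hz)
    obtain ⟨_, rfl, hb⟩ := hk e b
    obtain rfl : b = e := List.mem_singleton.mp hb
    exact ⟨[b], z, isLegal_of_mem_substPowWord (k := 0) rfl, mem_substWord_singleton.mpr hz, he⟩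
  | succ k =>
    obtain ⟨z, hz, hbz⟩ := hk b b
    simp only [substPowWord, Set.mem_iUnion] at hz
    obtain ⟨w, hw, hzw⟩ := hz
    exact ⟨w, z, isLegal_of_mem_substPowWord hw, hzw, hbz⟩

theorem IsLegal.exists_infix_substWord (hθ : RandomSubstitution θ) (hprim : Primitive θ)
    {u : List A} (hu : IsLegal θ u) : ∃ w z, IsLegal θ w ∧ z ∈ substWord θ w ∧ u <:+: z := by
  obtain ⟨k, a, z, hz, huz⟩ := hu
  cases k with
  | zero =>
    obtain ⟨w, z', hw, hz', haz⟩ := exists_mem_substWord hθ hprim a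
    refine ⟨w, z', hw, hz', huz.trans ?_⟩
    rw [show z = [a] from hz]
    exact (List.singleton_infix_iff a z').mpr haz
  | succ k =>
    simp only [substPowWord, Set.mem_iUnion] at hz
    obtain ⟨w, hw, hzw⟩ := hz
    exact ⟨w, z, isLegal_of_mem_substPowWord hw, hzw, huz⟩

end Legal

theorem Nat.exists_lt_dvd_add_mul {q ℓ : ℕ} (hq : 0 < q) (hcop : ℓ.Coprime q) (r : ℕ) :
    ∃ j < q, q ∣ r + j * ℓ := by
  have : NeZero q := ⟨hq.ne'⟩
  refine ⟨(-(r : ZMod q) * (ℓ : ZMod q)⁻¹).val, ZMod.val_lt _, ?_⟩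
  rw [← ZMod.natCast_eq_zero_iff]
  push_cast
  rw [ZMod.natCast_val, ZMod.cast_id, mul_assoc, mul_comm _ (ℓ : ZMod q),
    ZMod.coe_mul_inv_eq_one ℓ hcop]
  ring

section Periodic

variable {θ : A → Set (List A)} {ℓ : ℕ}

theorem IsLegal.exists_desubstitution (hθ : RandomSubstitution θ) (hprim : Primitive θ)
    (hℓ : ConstantLength θ ℓ) (hℓpos : 0 < ℓ) {u : List A} (hu : IsLegal θ u) {n : ℕ}
    (hn : (n + 1) * ℓ ≤ u.length) :
    ∃ r, r + n * ℓ ≤ u.length ∧ ∃ w, IsLegal θ w ∧ w.length = n ∧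
      ∀ j a, w[j]? = some a → (u.drop (r + j * ℓ)).take ℓ ∈ θ a := by
  obtain ⟨w, z, hw, hz, s, t, rfl⟩ := hu.exists_infix_substWord hθ hprim
  -- `m` is the index of the first block of `z` that starts inside `u`
  set m := s.length / ℓ + 1
  have hm : s.length ≤ m * ℓ ∧ m * ℓ ≤ s.length + ℓ := by
    have := Nat.div_add_mod' s.length ℓ
    have := Nat.mod_lt s.length hℓpos
    have : m * ℓ = s.length / ℓ * ℓ + ℓ := add_one_mul _ _
    omega
  obtain ⟨r, hmr, hr⟩ : ∃ r, m * ℓ = s.length + r ∧ r ≤ ℓ := ⟨m * ℓ - s.length, by omega, by omega⟩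
  have hzlen := length_of_mem_substWord hℓ hz
  simp only [List.length_append] at hzlen
  have hmn : m + n ≤ w.length := Nat.le_of_mul_le_mul_right (by linarith) hℓpos
  refine ⟨r, by linarith, (w.drop m).take n,
    hw.of_infix ((List.take_prefix _ _).isInfix.trans (List.drop_suffix _ _).isInfix),
    by simp; omega, fun j a hj => ?_⟩
  rw [List.getElem?_take, List.getElem?_drop] at hj
  split_ifs at hj with hjn
  have hfits : r + j * ℓ + ℓ ≤ u.length := by
    nlinarith [Nat.mul_le_mul_right ℓ (show j + 1 ≤ n from hjn)]
  convert take_drop_mem_of_mem_substWord hℓ hz hj using 1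
  rw [show (m + j) * ℓ = s.length + (r + j * ℓ) by rw [add_mul, hmr, add_assoc],
    List.append_assoc, List.drop_length_add_append, List.drop_append_of_le_length (by omega),
    List.take_append_of_le_length (by simp; omega)]

theorem IsLegal.exists_wordHasPeriod_div_gcd (hθ : RandomSubstitution θ) (hprim : Primitive θ)
    (hd : HasDisjointImages θ) (hℓ : ConstantLength θ ℓ) (hℓpos : 0 < ℓ) {u : List A}
    (hu : IsLegal θ u) {q : ℕ} (hper : WordHasPeriod u q) {n : ℕ}
    (hn : (n + 1) * ℓ ≤ u.length) :
    ∃ w, IsLegal θ w ∧ w.length = n ∧ WordHasPeriod w (q / q.gcd ℓ) := by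
  obtain ⟨r, hr, w, hw, hwlen, hblocks⟩ := hu.exists_desubstitution hθ hprim hℓ hℓpos hn
  refine ⟨w, hw, hwlen, fun j hj => ?_⟩
  set q₁ := q / q.gcd ℓ
  -- shifting by `q₁` blocks shifts `u` by a multiple of its period
  have hshift : q₁ * ℓ = ℓ / q.gcd ℓ * q := by
    rw [Nat.div_mul_right_comm (Nat.gcd_dvd_left q ℓ),
      Nat.div_mul_right_comm (Nat.gcd_dvd_right q ℓ), mul_comm]
  have hfits : r + j * ℓ + ℓ / q.gcd ℓ * q + ℓ ≤ u.length := by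
    nlinarith [Nat.mul_le_mul_right ℓ (show j + q₁ + 1 ≤ n by omega)]
  rw [List.getElem?_eq_getElem hj, List.getElem?_eq_getElem ((Nat.le_add_right j q₁).trans_lt hj)]
  congr 1
  refine hd.eq_of_mem (hw.singleton_of_mem (List.getElem_mem _))
    (hw.singleton_of_mem (List.getElem_mem _)) (hblocks _ _ (List.getElem?_eq_getElem _)) ?_
  rw [add_mul, hshift, ← add_assoc, hper.take_drop_add_mul hfits]
  exact hblocks _ _ (List.getElem?_eq_getElem _)

theorem IsLegal.exists_take_mem_of_coprime (hθ : RandomSubstitution θ) (hprim : Primitive θ)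
    (hℓ : ConstantLength θ ℓ) (hℓpos : 0 < ℓ) {u : List A} (hu : IsLegal θ u) {q : ℕ}
    (hper : WordHasPeriod u q) (hq : 0 < q) (hcop : ℓ.Coprime q)
    (hlen : (q + 1) * ℓ ≤ u.length) : ∃ a, u.take ℓ ∈ θ a := by
  obtain ⟨r, hr, w, -, hwlen, hblocks⟩ := hu.exists_desubstitution hθ hprim hℓ hℓpos hlen
  obtain ⟨j, hj, c, hc⟩ := Nat.exists_lt_dvd_add_mul hq hcop r
  have hfits : 0 + c * q + ℓ ≤ u.length := by
    nlinarith [Nat.mul_le_mul_right ℓ (show j + 1 ≤ q from hj)]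
  have hjw : j < w.length := hwlen ▸ hj
  have hblock := hblocks j w[j] (List.getElem?_eq_getElem hjw)
  rw [hc, mul_comm, ← zero_add (c * q), hper.take_drop_add_mul hfits, List.drop_zero] at hblock
  exact ⟨_, hblock⟩

def HasPeriodicLegalWords (θ : A → Set (List A)) (q : ℕ) : Prop :=
  ∀ n, ∃ u, IsLegal θ u ∧ u.length = n ∧ WordHasPeriod u q

theorem HasPeriodicLegalWords.exists_coprime (hθ : RandomSubstitution θ) (hprim : Primitive θ)
    (hd : HasDisjointImages θ) (hℓ : ConstantLength θ ℓ) (hℓpos : 0 < ℓ) {q : ℕ} (hq : 0 < q)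
    (h : HasPeriodicLegalWords θ q) :
    ∃ q', 0 < q' ∧ ℓ.Coprime q' ∧ HasPeriodicLegalWords θ q' := by
  induction q using Nat.strong_induction_on with
  | _ q ih =>
    by_cases hcop : ℓ.Coprime q
    · exact ⟨q, hq, hcop, h⟩
    · have hgcd : 1 < q.gcd ℓ :=
        lt_of_le_of_ne (Nat.gcd_pos_of_pos_left ℓ hq) fun h => hcop (Nat.Coprime.symm h.symm)
      refine ih _ (Nat.div_lt_self hq hgcd)
        (Nat.div_pos (Nat.le_of_dvd hq (Nat.gcd_dvd_left q ℓ)) (by omega)) fun n => ?_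
      obtain ⟨u, hu, hlen, hper⟩ := h ((n + 1) * ℓ)
      exact hu.exists_wordHasPeriod_div_gcd hθ hprim hd hℓ hℓpos hper hlen.ge

theorem HasPeriodicLegalWords.exists_hasPeriod_mem_subshift [Finite A] {q : ℕ} (hq : 0 < q)
    (h : HasPeriodicLegalWords θ q) : ∃ y ∈ Subshift θ, HasPeriod y q := by
  have : NeZero q := ⟨hq.ne'⟩
  choose u hu hlen hper using h
  have hlt : ∀ N (r : ZMod q), r.val < (u (N + q)).length := fun N r => by
    rw [hlen]; have := ZMod.val_lt r; omega
  -- a `q`-periodic word is determined by its first `q` letters, which take finitely many values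
  obtain ⟨c, hc⟩ := Finite.exists_infinite_fiber fun N (r : ZMod q) => (u (N + q))[r.val]'(hlt N r)
  set y : ℤ → A := fun j => c j
  have hy : HasPeriod y q := fun n => by simp [y]
  have hprefix : ∀ M, IsLegal θ (extract y 0 M) := by
    intro M
    obtain ⟨N, hN, hMN⟩ := (Set.infinite_coe_iff.mp hc).exists_gt M
    rw [Set.mem_preimage, Set.mem_singleton_iff] at hN
    have hyN : extract y 0 (N + q) = u (N + q) := by
      refine List.ext_getElem? fun t => ?_
      rw [getElem?_extract]
      split_ifs with ht
      · rw [(hper _).getElem?_mod (by rw [hlen]; exact ht), ← ZMod.val_natCast,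
          List.getElem?_eq_getElem (hlt N _)]
        simp [y, ← hN]
      · rw [List.getElem?_eq_none (by rw [hlen]; omega)]
    rw [← min_eq_left (show M ≤ N + q by omega), ← take_extract, hyN]
    exact (hu _).of_infix (List.take_prefix _ _).isInfix
  refine ⟨y, fun i n => ?_, hy⟩
  set s := (i : ZMod q).val
  have hshift : extract y i n = (extract y 0 (s + n)).drop s := by
    rw [drop_extract, zero_add, Nat.add_sub_cancel_left, extract_eq_map, extract_eq_map]
    refine List.map_congr_left fun t _ => ?_
    simp [y, s]
  rw [hshift]
  exact (hprefix _).of_infix (List.drop_suffix _ _).isInfix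

end Periodic

theorem no_periodic_points_general
    (θ : A → Set (List A)) (hθ : RandomSubstitution θ)
    (hprim : Primitive θ)
    (ℓ : ℕ) (hℓ : ConstantLength θ ℓ) (hd : HasDisjointImages θ)
    (v : List A)
    (hvnot : ∀ a : A, v ∉ θ a)
    (hunavoid : ∀ x ∈ Subshift θ, ∃ i : ℤ, extract x i ℓ = v) :
    ∀ x ∈ Subshift θ, ¬ IsPeriodic x := by
  rintro x hx ⟨p, hp, hxp⟩
  have : Nonempty A := ⟨x 0⟩
  have := finite_of_primitive hθ hprim
  have hℓpos := hℓ.pos hθ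
  obtain ⟨q, hq, hcop, hwords⟩ := HasPeriodicLegalWords.exists_coprime hθ hprim hd hℓ hℓpos hp
    fun n => ⟨extract x 0 n, hx 0 n, length_extract x 0 n, hxp.wordHasPeriod_extract 0 n⟩
  obtain ⟨y, hy, hyq⟩ := hwords.exists_hasPeriod_mem_subshift hq
  obtain ⟨i, hi⟩ := hunavoid y hy
  obtain ⟨a, ha⟩ := (hy i ((q + 1) * ℓ)).exists_take_mem_of_coprime hθ hprim hℓ hℓpos
    (hyq.wordHasPeriod_extract i _) hq hcop (length_extract y i _).ge
  rw [take_extract, min_eq_left (by nlinarith), hi] at ha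
  exact hvnot a ha

/-- a primitive compatible constant-length substitution with
disjoint images admitting an unavoidable non-inflation legal word of length `ℓ`
has no periodic points in its subshift. -/
theorem no_periodic_points [DecidableEq A]
    (θ : A → Set (List A)) (hθ : RandomSubstitution θ)
    (hc : Compatible θ) (hprim : Primitive θ)
    (ℓ : ℕ) (hℓ : ConstantLength θ ℓ) (hd : HasDisjointImages θ)
    (v : List A) (hv : IsLegal θ v) (hvlen : v.length = ℓ)
    (hvnot : ∀ a : A, v ∉ θ a)
    (hunavoid : ∀ x ∈ Subshift θ, ∃ i : ℤ, extract x i ℓ = v) :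
    ∀ x ∈ Subshift θ, ¬ IsPeriodic x :=
  no_periodic_points_general θ hθ hprim ℓ hℓ hd v hvnot hunavoid
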